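/- Every (K_9,2)-cockade on n vertices has exactly 5n − 9 edges and does not contain the Petersen graph as a minor. -/

import Mathlib

open SimpleGraph

/-- The Petersen graph: the Kneser graph whose vertices are the 2-element subsets of a
5-element set, with two vertices adjacent iff the corresponding subsets are disjoint. -/
def Petersen : SimpleGraph {s : Finset (Fin 5) // s.card = 2} where
  Adj a b := Disjoint a.1 b.1
  symm := ⟨fun _ _ h => h.symm⟩
  loopless := ⟨fun a h => by
    have h1 : a.1 = ⊥ := disjoint_self.mp h
    have h2 := a.2
    rw [h1] at h2
    simp at h2⟩

/-- `H` is a minor of `G`: there is a family of nonempty, pairwise-disjoint connected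
branch sets in `G`, one for each vertex of `H`, with an edge of `G` between the branch
sets corresponding to each edge of `H`. -/
def IsMinor {W V : Type*} (H : SimpleGraph W) (G : SimpleGraph V) : Prop :=
  ∃ f : W → Set V,
    (∀ w, (G.induce (f w)).Connected) ∧
    (∀ w₁ w₂ : W, w₁ ≠ w₂ → Disjoint (f w₁) (f w₂)) ∧
    ∀ ⦃w₁ w₂ : W⦄, H.Adj w₁ w₂ → ∃ v₁ ∈ f w₁, ∃ v₂ ∈ f w₂, G.Adj v₁ v₂

/-- The vertex set `A` carries a `(K_s, t)`-cockade structure in `G`: either `G[A]` is a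
complete graph on `s` vertices, or `A` is the union of two proper subsets `B` and `C`,
each carrying a cockade structure, whose intersection is a clique on `t` vertices, with
no edges of `G` joining `B \ C` to `C \ B`. -/
inductive CockadeOn {V : Type*} (G : SimpleGraph V) (s t : ℕ) : Set V → Prop
  | base (A : Set V) (hcard : A.ncard = s) (hclique : G.IsClique A) : CockadeOn G s t A
  | glue (A B C : Set V) (hun : B ∪ C = A) (hB : B ≠ A) (hC : C ≠ A)
      (hcard : (B ∩ C).ncard = t) (hclique : G.IsClique (B ∩ C))
      (hcross : ∀ x ∈ B \ C, ∀ y ∈ C \ B, ¬ G.Adj x y)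
      (h1 : CockadeOn G s t B) (h2 : CockadeOn G s t C) : CockadeOn G s t A

/-- `G` is a `(K_9, 2)`-cockade. -/
def IsK9Cockade {V : Type*} (G : SimpleGraph V) : Prop := CockadeOn G 9 2 Set.univ

/-- `G` is a spanning subgraph of a `(K_9, 2)`-cockade
(equivalently, a `(K_9,2)`-cockade minus some set of edges). -/
def SpanningSubgraphOfK9Cockade {V : Type*} (G : SimpleGraph V) : Prop :=
  ∃ G' : SimpleGraph V, G ≤ G' ∧ IsK9Cockade G'

/-- A separation of `G`: a pair `(A, B)` of vertex subsets with `A \ B` and `B \ A`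
nonempty such that every edge of `G` has both endpoints in `A` or both in `B`. -/
def IsSep {V : Type*} (G : SimpleGraph V) (A B : Set V) : Prop :=
  (A \ B).Nonempty ∧ (B \ A).Nonempty ∧
    ∀ ⦃x y : V⦄, G.Adj x y → (x ∈ A ∧ y ∈ A) ∨ (x ∈ B ∧ y ∈ B)

/-- `G` is `k`-connected: it has at least `k + 1` vertices and no separation of order
less than `k`. -/
def KConnected {V : Type*} (k : ℕ) (G : SimpleGraph V) : Prop :=
  k + 1 ≤ Nat.card V ∧ ∀ A B : Set V, IsSep G A B → k ≤ (A ∩ B).ncard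

/-- The number of edges of `G`. -/
noncomputable def edgeCount {V : Type*} (G : SimpleGraph V) : ℕ := Nat.card G.edgeSet

/-- The closed neighbourhood `N[v]`. -/
def closedNbhd {V : Type*} (G : SimpleGraph V) (v : V) : Set V :=
  insert v (G.neighborSet v)

/-- The degree of a vertex, as the cardinality of its neighbour set. -/
noncomputable def deg {V : Type*} (G : SimpleGraph V) (v : V) : ℕ :=
  (G.neighborSet v).ncard

/-- The neighbourhood `N(C)` of a vertex set `C`: all vertices outside `C`
adjacent to some vertex of `C`. -/
def setNbhd {V : Type*} (G : SimpleGraph V) (C : Set V) : Set V :=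
  {u | u ∉ C ∧ ∃ x ∈ C, G.Adj u x}

/-- `C` is (the vertex set of) a connected component of the induced subgraph `G[S]`. -/
def IsCompOf {V : Type*} (G : SimpleGraph V) (S C : Set V) : Prop :=
  C ⊆ S ∧ (G.induce C).Connected ∧ ∀ x ∈ C, ∀ y ∈ S, G.Adj x y → y ∈ C

/-- `G` is a minor-minimal counterexample: (i) `G` has at least 3 vertices;
(ii) `G` has at least `5n - 11` edges; (iii) `G` is not a spanning subgraph of a
`(K_9,2)`-cockade; (iv) the Petersen graph is not a minor of `G`; (v) every proper
minor `H` of `G` with at least three vertices has at most `5|V(H)| - 12` edges or is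
a spanning subgraph of a `(K_9,2)`-cockade. -/
def MinCounterexample {V : Type} [Fintype V] (G : SimpleGraph V) : Prop :=
  3 ≤ Nat.card V ∧
  (5 : ℤ) * (Nat.card V : ℤ) - 11 ≤ (edgeCount G : ℤ) ∧
  ¬ SpanningSubgraphOfK9Cockade G ∧
  ¬ IsMinor Petersen G ∧
  ∀ (W : Type) [Fintype W], ∀ H : SimpleGraph W,
    IsMinor H G → ¬ Nonempty (H ≃g G) → 3 ≤ Nat.card W →
      ((edgeCount H : ℤ) ≤ 5 * (Nat.card W : ℤ) - 12 ∨ SpanningSubgraphOfK9Cockade H)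

/-- The set `𝓛`: vertices `v` of degree at most 9 such that no vertex `u` satisfies
`N[u] ⊊ N[v]`. -/
def goodSet {V : Type*} (G : SimpleGraph V) : Set V :=
  {v | deg G v ≤ 9 ∧ ¬ ∃ u, closedNbhd G u ⊂ closedNbhd G v}

/-- Planarity, via Wagner's characterisation: a graph is planar iff it has
neither a `K₅` minor nor a `K₃,₃` minor. -/
def IsPlanar {V : Type*} (G : SimpleGraph V) : Prop :=
  ¬ IsMinor (completeGraph (Fin 5)) G ∧
  ¬ IsMinor (completeBipartiteGraph (Fin 3) (Fin 3)) G

/-- The join `K₅ + complement (K_m)`. -/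
def K5Join (m : ℕ) : SimpleGraph (Fin 5 ⊕ Fin m) where
  Adj a b := a ≠ b ∧ (a.isLeft = true ∨ b.isLeft = true)
  symm := ⟨fun _ _ h => ⟨h.1.symm, h.2.symm⟩⟩
  loopless := ⟨fun _ h => h.1 rfl⟩

/-!
Gluing two cockades along an edge adds their edge counts less one and their vertex counts less
two, so `|E| = 5|V| - 9` propagates from `K_9` (`36 = 5 · 9 - 9`); for `(K_s, t)`-cockades the
invariant is `2|E| = (s + t - 1)|V| - st`.

The Petersen graph is 3-connected and has 10 vertices. Take a minor model of it in a graph glued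
from `G₁` and `G₂` along a clique `K` of size 2. At most two branch sets meet `K`, so by
3-connectivity all the others lie on one side, say in `G₁`. Cutting every branch set down to
`V(G₁)` keeps it connected (a detour through `G₂` is replaced by an edge of `K`) and keeps the
edges between branch sets (two branch sets meeting `K` are joined inside `K`). Hence `G₁` has a
Petersen minor too, and inductively so would some `K_9`, which has too few vertices.
-/

namespace SimpleGraph

variable {V W : Type*}

theorem Reachable.map_of_adj_or_eq {G : SimpleGraph V} {H : SimpleGraph W} (f : V → W)
    (hf : ∀ ⦃x y⦄, G.Adj x y → f x = f y ∨ H.Adj (f x) (f y)) {u v : V}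
    (h : G.Reachable u v) : H.Reachable (f u) (f v) := by
  obtain ⟨p⟩ := h
  induction p with
  | nil => rfl
  | cons hadj _ ih => exact (hf hadj).elim (fun h => h ▸ ih) (fun h => h.reachable.trans ih)

theorem IsClique.ncard_edgeSet_inter_sym2 [Finite V] {G : SimpleGraph V} {K : Set V}
    (hK : G.IsClique K) : (G.edgeSet ∩ K.sym2).ncard = K.ncard.choose 2 := by
  classical
  have := Fintype.ofFinite V
  calc (G.edgeSet ∩ K.sym2).ncard = (G.edgeFinset ∩ K.toFinset.sym2).card := by
        rw [← Set.ncard_coe_finset]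
        simp
    _ = (G.induce K).edgeFinset.card := by
        rw [← map_edgeFinset_induce, Finset.card_map]
    _ = K.ncard.choose 2 := by
        rw [Set.ncard_eq_toFinset_card', Set.toFinset_card,
          ← card_edgeFinset_top_eq_card_choose_two]
        congr 1
        exact edgeFinset_inj.mpr (induce_eq_top.mpr hK)

end SimpleGraph

open SimpleGraph

theorem two_mul_choose_two_eq (n : ℕ) : 2 * (n.choose 2 : ℤ) = n * (n - 1) := by
  rcases n with _ | n
  · simp
  · have h : (n + 1).choose 2 * 2 = (n + 1) * n := by
      rw [Nat.choose_two_right, Nat.div_two_mul_two_of_even (Nat.even_mul_pred_self _),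
        Nat.add_sub_cancel]
    push_cast
    linear_combination (by exact_mod_cast h : (((n + 1).choose 2 : ℕ) : ℤ) * 2 = (n + 1) * n)

theorem kConnected_of_preconnected_induce_compl {V : Type*} [Finite V] {G : SimpleGraph V}
    {k : ℕ} (hcard : k + 1 ≤ Nat.card V)
    (hconn : ∀ S : Set V, S.ncard + 1 = k → (G.induce Sᶜ).Preconnected) : KConnected k G := by
  refine ⟨hcard, fun A B ⟨⟨x, hxA, hxB⟩, ⟨y, hyB, hyA⟩, hadj⟩ => ?_⟩
  by_contra! hlt
  have hxy : x ≠ y := fun h => hxB (h ▸ hyB)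
  have hpair : ({x, y}ᶜ : Set V).ncard + 2 = Nat.card V := by
    rw [← Set.ncard_pair hxy, add_comm, Set.ncard_add_ncard_compl]
  -- Enlarge the separator `A ∩ B` to a deleted set of size `k - 1` that misses `x` and `y`.
  obtain ⟨S, hABS, hS, hSk⟩ := Set.exists_subsuperset_card_eq (s := A ∩ B) (t := {x, y}ᶜ)
    (n := k - 1) (Set.subset_compl_comm.mp (by rintro v (rfl | rfl) ⟨hA, hB⟩ <;> contradiction))
    (by omega) (by omega)
  obtain ⟨p⟩ := hconn S (by omega) ⟨x, fun h => hS h (by simp)⟩ ⟨y, fun h => hS h (by simp)⟩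
  obtain ⟨d, -, hfst, hsnd⟩ := p.exists_boundary_dart {v | (v : V) ∈ A} hxA hyA
  rcases hadj d.adj with ⟨-, h⟩ | ⟨h, -⟩
  · exact hsnd h
  · exact d.fst.2 (hABS ⟨hfst, h⟩)

structure MinorModel {W V : Type*} (H : SimpleGraph W) (G : SimpleGraph V) where
  branch : W → Set V
  connected : ∀ w, (G.induce (branch w)).Connected
  disjoint : ∀ w₁ w₂, w₁ ≠ w₂ → Disjoint (branch w₁) (branch w₂)
  exists_adj : ∀ ⦃w₁ w₂⦄, H.Adj w₁ w₂ → ∃ v₁ ∈ branch w₁, ∃ v₂ ∈ branch w₂, G.Adj v₁ v₂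

theorem IsMinor.nonempty_minorModel {W V : Type*} {H : SimpleGraph W} {G : SimpleGraph V}
    (h : IsMinor H G) : Nonempty (MinorModel H G) :=
  let ⟨f, hconn, hdisj, hadj⟩ := h; ⟨⟨f, hconn, hdisj, hadj⟩⟩

namespace MinorModel

variable {W V : Type*} {H : SimpleGraph W} {G : SimpleGraph V} (M : MinorModel H G)

theorem branch_nonempty (w : W) : (M.branch w).Nonempty :=
  let ⟨⟨v, hv⟩⟩ := (M.connected w).nonempty; ⟨v, hv⟩

theorem eq_of_mem_branch {w₁ w₂ : W} {v : V} (h₁ : v ∈ M.branch w₁) (h₂ : v ∈ M.branch w₂) :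
    w₁ = w₂ := by
  by_contra hne
  exact Set.disjoint_left.mp (M.disjoint w₁ w₂ hne) h₁ h₂

theorem card_le_ncard [Finite V] {A : Set V} (hA : ∀ w, M.branch w ⊆ A) :
    Nat.card W ≤ A.ncard := by
  choose r hr using M.branch_nonempty
  rw [← Nat.card_coe_set_eq]
  exact Nat.card_le_card_of_injective (fun w => ⟨r w, hA w (hr w)⟩)
    fun w₁ w₂ h => M.eq_of_mem_branch (hr w₁) ((Subtype.mk.inj h).symm ▸ hr w₂)

theorem ncard_branch_meets_le [Finite V] (K : Set V) :
    {w | (M.branch w ∩ K).Nonempty}.ncard ≤ K.ncard := by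
  rw [← Nat.card_coe_set_eq, ← Nat.card_coe_set_eq]
  exact Nat.card_le_card_of_injective (fun w => ⟨w.2.some, w.2.some_mem.2⟩)
    fun w₁ w₂ h => Subtype.ext (M.eq_of_mem_branch w₁.2.some_mem.1
      ((Subtype.mk.inj h).symm ▸ w₂.2.some_mem.1))

end MinorModel

def NoCrossEdges {V : Type*} (G : SimpleGraph V) (B C : Set V) : Prop :=
  ∀ x ∈ B \ C, ∀ y ∈ C \ B, ¬ G.Adj x y

namespace NoCrossEdges

variable {V W : Type*} {G : SimpleGraph V} {H : SimpleGraph W} {B C : Set V}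

theorem symm (h : NoCrossEdges G B C) : NoCrossEdges G C B :=
  fun x hx y hy hxy => h y hy x hx hxy.symm

theorem mem_and_mem_or (h : NoCrossEdges G B C) {x y : V} (hx : x ∈ B ∪ C) (hy : y ∈ B ∪ C)
    (hxy : G.Adj x y) : (x ∈ B ∧ y ∈ B) ∨ (x ∈ C ∧ y ∈ C) := by
  have := h x; have := h y
  grind [G.adj_symm hxy]

theorem edgeSet_inter_sym2_union (h : NoCrossEdges G B C) :
    G.edgeSet ∩ (B ∪ C).sym2 = G.edgeSet ∩ B.sym2 ∪ G.edgeSet ∩ C.sym2 := by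
  ext ⟨x, y⟩
  have := fun hx hy hxy => h.mem_and_mem_or (x := x) (y := y) hx hy hxy
  simp only [Set.mem_inter_iff, Set.mem_union, mem_edgeSet, Set.mk_mem_sym2_iff] at this ⊢
  tauto

theorem inter_inter_nonempty (h : NoCrossEdges G B C) {X : Set V} (hX : X ⊆ B ∪ C)
    (hconn : (G.induce X).Preconnected) (hXB : (X ∩ B).Nonempty) (hnot : ¬ X ⊆ B) :
    (X ∩ (B ∩ C)).Nonempty := by
  obtain ⟨p, hpX, hpB⟩ := hXB
  obtain ⟨q, hqX, hqB⟩ := Set.not_subset.mp hnot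
  obtain ⟨w⟩ := hconn ⟨p, hpX⟩ ⟨q, hqX⟩
  obtain ⟨d, -, hfst, hsnd⟩ := w.exists_boundary_dart {v | (v : V) ∈ B} hpB hqB
  rcases h.mem_and_mem_or (hX d.fst.2) (hX d.snd.2) d.adj with ⟨-, hB⟩ | ⟨hC, -⟩
  · exact absurd hB hsnd
  · exact ⟨d.fst, d.fst.2, hfst, hC⟩

theorem connected_induce_inter (h : NoCrossEdges G B C) (hK : G.IsClique (B ∩ C))
    {X : Set V} (hX : X ⊆ B ∪ C) (hconn : (G.induce X).Connected) (hXB : (X ∩ B).Nonempty) :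
    (G.induce (X ∩ B)).Connected := by
  by_cases hsub : X ⊆ B
  · rwa [Set.inter_eq_left.mpr hsub]
  classical
  obtain ⟨c, hcX, hcK⟩ := h.inter_inter_nonempty hX hconn.preconnected hXB hsub
  -- Contract `X \ B` onto `c`: an edge leaving `B` starts in the clique `B ∩ C`, which
  -- contains `c`.
  let f : X → ↥(X ∩ B) := fun v => if hv : (v : V) ∈ B then ⟨v, v.2, hv⟩ else ⟨c, hcX, hcK.1⟩
  have hf : ∀ ⦃x y⦄, (G.induce X).Adj x y → f x = f y ∨ (G.induce (X ∩ B)).Adj (f x) (f y) := by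
    intro x y hxy
    have hxy' : G.Adj x y := hxy
    have hc : ∀ u ∈ B ∩ C, u = c ∨ G.Adj u c := fun u hu => or_iff_not_imp_left.2 (hK hu hcK)
    have hxy_mem := h.mem_and_mem_or (hX x.2) (hX y.2) hxy'
    by_cases hx : (x : V) ∈ B <;> by_cases hy : (y : V) ∈ B
    · exact Or.inr (by simpa [f, hx, hy] using hxy')
    · have hxC : (x : V) ∈ C := (hxy_mem.resolve_left fun h' => hy h'.2).1
      simpa [f, hx, hy, Subtype.ext_iff] using hc x ⟨hx, hxC⟩
    · have hyC : (y : V) ∈ C := (hxy_mem.resolve_left fun h' => hx h'.1).2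
      simpa [f, hx, hy, Subtype.ext_iff, eq_comm, G.adj_comm] using hc y ⟨hy, hyC⟩
    · exact Or.inl (by simp [f, hx, hy])
  rw [connected_iff]
  refine ⟨fun u v => ?_, hXB.to_subtype⟩
  simpa [f, u.2.2, v.2.2] using
    (hconn.preconnected ⟨u, u.2.1⟩ ⟨v, v.2.1⟩).map_of_adj_or_eq f hf

theorem exists_minorModel_subset_left (h : NoCrossEdges G B C) (hK : G.IsClique (B ∩ C))
    (M : MinorModel H G) (hsub : ∀ w, M.branch w ⊆ B ∪ C)
    (hmeet : ∀ w, M.branch w ⊆ B ∨ (M.branch w ∩ (B ∩ C)).Nonempty) :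
    ∃ M' : MinorModel H G, ∀ w, M'.branch w ⊆ B := by
  have hside : ∀ {w v}, v ∈ M.branch w → ¬ (M.branch w ∩ (B ∩ C)).Nonempty → v ∉ C :=
    fun hv hm hvC => hm ⟨_, hv, (hmeet _).resolve_right hm hv, hvC⟩
  refine ⟨⟨fun w => M.branch w ∩ B, fun w => ?_, fun w₁ w₂ hne => ?_, fun w₁ w₂ hadj => ?_⟩,
    fun w => Set.inter_subset_right⟩
  · refine h.connected_induce_inter hK (hsub w) (M.connected w) ?_
    rcases hmeet w with hB | ⟨c, hc, hcK⟩
    · obtain ⟨v, hv⟩ := M.branch_nonempty w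
      exact ⟨v, hv, hB hv⟩
    · exact ⟨c, hc, hcK.1⟩
  · exact (M.disjoint w₁ w₂ hne).mono Set.inter_subset_left Set.inter_subset_left
  · by_cases hm : (M.branch w₁ ∩ (B ∩ C)).Nonempty ∧ (M.branch w₂ ∩ (B ∩ C)).Nonempty
    · obtain ⟨⟨c₁, hc₁, hK₁⟩, ⟨c₂, hc₂, hK₂⟩⟩ := hm
      have hne : c₁ ≠ c₂ := fun he => hadj.ne (M.eq_of_mem_branch hc₁ (he ▸ hc₂))
      exact ⟨c₁, ⟨hc₁, hK₁.1⟩, c₂, ⟨hc₂, hK₂.1⟩, hK hK₁ hK₂ hne⟩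
    obtain ⟨v₁, hv₁, v₂, hv₂, hv⟩ := M.exists_adj hadj
    rcases h.mem_and_mem_or (hsub _ hv₁) (hsub _ hv₂) hv with ⟨hB₁, hB₂⟩ | ⟨hC₁, hC₂⟩
    · exact ⟨v₁, ⟨hv₁, hB₁⟩, v₂, ⟨hv₂, hB₂⟩, hv⟩
    · rcases not_and_or.mp hm with hm | hm
      · exact absurd hC₁ (hside hv₁ hm)
      · exact absurd hC₂ (hside hv₂ hm)

theorem forall_subset_or_meets [Finite V] (h : NoCrossEdges G B C) {t : ℕ}
    (hH : KConnected (t + 1) H) (hcard : (B ∩ C).ncard ≤ t) (M : MinorModel H G)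
    (hsub : ∀ w, M.branch w ⊆ B ∪ C) :
    (∀ w, M.branch w ⊆ B ∨ (M.branch w ∩ (B ∩ C)).Nonempty) ∨
      (∀ w, M.branch w ⊆ C ∨ (M.branch w ∩ (B ∩ C)).Nonempty) := by
  have : Finite W := Nat.finite_of_card_ne_zero (by have := hH.1; omega)
  by_contra hcon
  simp only [not_or, not_forall] at hcon
  obtain ⟨⟨w₁, hw₁B, hw₁K⟩, ⟨w₂, hw₂C, hw₂K⟩⟩ := hcon
  -- The branch sets meeting `B` and those meeting `C` form a separation of `H`, whose
  -- separator consists of branch sets meeting `B ∩ C`.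
  set SB := {w | (M.branch w ∩ B).Nonempty}
  set SC := {w | (M.branch w ∩ C).Nonempty}
  have hSBC : SB ∩ SC ⊆ {w | (M.branch w ∩ (B ∩ C)).Nonempty} := by
    rintro w ⟨hwB, ⟨q, hq, hqC⟩⟩
    by_cases hXB : M.branch w ⊆ B
    · exact ⟨q, hq, hXB hq, hqC⟩
    · exact h.inter_inter_nonempty (hsub w) (M.connected w).preconnected hwB hXB
  have hw₂ : w₂ ∈ SB :=
    let ⟨v, hv, hvC⟩ := Set.not_subset.mp hw₂C; ⟨v, hv, (hsub w₂ hv).resolve_right hvC⟩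
  have hw₁ : w₁ ∈ SC :=
    let ⟨v, hv, hvB⟩ := Set.not_subset.mp hw₁B; ⟨v, hv, (hsub w₁ hv).resolve_left hvB⟩
  have hsep : IsSep H SB SC := by
    refine ⟨⟨w₂, hw₂, fun hw => hw₂K (hSBC ⟨hw₂, hw⟩)⟩, ⟨w₁, hw₁, fun hw => hw₁K (hSBC ⟨hw, hw₁⟩)⟩,
      fun w w' hadj => ?_⟩
    obtain ⟨v, hv, v', hv', hvv'⟩ := M.exists_adj hadj
    rcases h.mem_and_mem_or (hsub w hv) (hsub w' hv') hvv' with ⟨hB, hB'⟩ | ⟨hC, hC'⟩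
    · exact Or.inl ⟨⟨v, hv, hB⟩, ⟨v', hv', hB'⟩⟩
    · exact Or.inr ⟨⟨v, hv, hC⟩, ⟨v', hv', hC'⟩⟩
  have := hH.2 SB SC hsep
  have := Set.ncard_le_ncard hSBC
  have := M.ncard_branch_meets_le (B ∩ C)
  omega

end NoCrossEdges

namespace CockadeOn

variable {V W : Type*} [Finite V] {G : SimpleGraph V} {H : SimpleGraph W} {s t : ℕ} {A : Set V}

theorem two_mul_ncard_edgeSet_inter_sym2 (hA : CockadeOn G s t A) :
    2 * ((G.edgeSet ∩ A.sym2).ncard : ℤ) = (s + t - 1) * A.ncard - s * t := by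
  induction hA with
  | base A hcard hK =>
    rw [hK.ncard_edgeSet_inter_sym2, hcard, two_mul_choose_two_eq]
    ring
  | glue A B C hun _ _ hcard hK hcross _ _ ihB ihC =>
    subst hun
    have hBC : NoCrossEdges G B C := hcross
    have hinter : (G.edgeSet ∩ B.sym2) ∩ (G.edgeSet ∩ C.sym2) = G.edgeSet ∩ (B ∩ C).sym2 := by
      rw [Set.sym2_inter]
      ext
      simp only [Set.mem_inter_iff]
      tauto
    have hE := Set.ncard_union_add_ncard_inter (G.edgeSet ∩ B.sym2) (G.edgeSet ∩ C.sym2)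
    rw [← hBC.edgeSet_inter_sym2_union, hinter, hK.ncard_edgeSet_inter_sym2, hcard] at hE
    have hV := Set.ncard_union_add_ncard_inter B C
    rw [hcard] at hV
    have hT := two_mul_choose_two_eq t
    zify at hE hV
    linear_combination 2 * hE + ihB + ihC - hT - (s + t - 1) * hV

theorem not_minorModel_subset (hA : CockadeOn G s t A) (hH : KConnected (t + 1) H)
    (hs : s < Nat.card W) (M : MinorModel H G) : ¬ ∀ w, M.branch w ⊆ A := by
  induction hA generalizing M with
  | base A hcard _ =>
    intro hsub
    have := M.card_le_ncard hsub
    omega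
  | glue A B C hun _ _ hcard hK hcross _ _ ihB ihC =>
    intro hsub
    subst hun
    have hBC : NoCrossEdges G B C := hcross
    rcases hBC.forall_subset_or_meets hH hcard.le M hsub with hB | hC
    · obtain ⟨M', hM'⟩ := hBC.exists_minorModel_subset_left hK M hsub hB
      exact ihB M' hM'
    · rw [Set.inter_comm] at hK hC
      obtain ⟨M', hM'⟩ := hBC.symm.exists_minorModel_subset_left hK M
        (fun w => Set.union_comm B C ▸ hsub w) hC
      exact ihC M' hM'

end CockadeOn
namespace Petersen

abbrev Vertex := {s : Finset (Fin 5) // s.card = 2}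

instance : DecidableRel Petersen.Adj :=
  fun a b => inferInstanceAs (Decidable (Disjoint a.1 b.1))

-- A numbering of the ten vertices, with the adjacency lists in that numbering, so that the
-- kernel can afford to run a breadth-first search.
def ofIndex : Fin 10 → Vertex
  | 0 => ⟨{0, 1}, rfl⟩ | 1 => ⟨{0, 2}, rfl⟩ | 2 => ⟨{0, 3}, rfl⟩ | 3 => ⟨{0, 4}, rfl⟩
  | 4 => ⟨{1, 2}, rfl⟩ | 5 => ⟨{1, 3}, rfl⟩ | 6 => ⟨{1, 4}, rfl⟩
  | 7 => ⟨{2, 3}, rfl⟩ | 8 => ⟨{2, 4}, rfl⟩ | 9 => ⟨{3, 4}, rfl⟩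

def nbrIndices : Fin 10 → List (Fin 10)
  | 0 => [7, 8, 9] | 1 => [5, 6, 9] | 2 => [4, 6, 8] | 3 => [4, 5, 7] | 4 => [2, 3, 9]
  | 5 => [1, 3, 8] | 6 => [1, 2, 7] | 7 => [0, 3, 6] | 8 => [0, 2, 5] | 9 => [0, 1, 4]

theorem ofIndex_bijective : Function.Bijective ofIndex := by decide

theorem adj_ofIndex_of_mem_nbrIndices :
    ∀ i, ∀ j ∈ nbrIndices i, Petersen.Adj (ofIndex i) (ofIndex j) := by
  decide

theorem card_vertex : Nat.card Vertex = 10 := by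
  rw [← Nat.card_fin 10]; exact (Nat.card_eq_of_bijective _ ofIndex_bijective).symm

def bfsRoot (i j : Fin 10) : Fin 10 :=
  if i ≠ 0 ∧ j ≠ 0 then 0 else if i ≠ 1 ∧ j ≠ 1 then 1 else 2

def bfs (i j : Fin 10) : ℕ → List (Fin 10)
  | 0 => [bfsRoot i j]
  | n + 1 => bfs i j n ++ ((bfs i j n).flatMap nbrIndices).filter (fun k => k ≠ i ∧ k ≠ j)

theorem bfsRoot_ne : ∀ i j, bfsRoot i j ≠ i ∧ bfsRoot i j ≠ j := by decide

theorem mem_bfs_five : ∀ i j k : Fin 10, k ≠ i → k ≠ j → k ∈ bfs i j 5 := by decide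

theorem ofIndex_mem_compl_pair {i j k : Fin 10} (hi : k ≠ i) (hj : k ≠ j) :
    ofIndex k ∈ ({ofIndex i, ofIndex j} : Set Vertex)ᶜ := by
  simp [ofIndex_bijective.injective.ne hi, ofIndex_bijective.injective.ne hj]

theorem reachable_of_mem_bfs (i j : Fin 10) (n : ℕ) :
    ∀ k ∈ bfs i j n, ∃ (hi : k ≠ i) (hj : k ≠ j),
      (Petersen.induce {ofIndex i, ofIndex j}ᶜ).Reachable
        ⟨_, ofIndex_mem_compl_pair (bfsRoot_ne i j).1 (bfsRoot_ne i j).2⟩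
        ⟨_, ofIndex_mem_compl_pair hi hj⟩ := by
  induction n with
  | zero =>
    simp only [bfs, List.mem_singleton, forall_eq]
    exact ⟨(bfsRoot_ne i j).1, (bfsRoot_ne i j).2, .refl _⟩
  | succ n ih =>
    simp only [bfs, List.mem_append, List.mem_filter, List.mem_flatMap, decide_eq_true_eq]
    rintro k (hk | ⟨⟨l, hl, hkl⟩, hi, hj⟩)
    · exact ih k hk
    · obtain ⟨hli, hlj, hreach⟩ := ih l hl
      exact ⟨hi, hj, hreach.trans (Adj.reachable (adj_ofIndex_of_mem_nbrIndices l k hkl))⟩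

theorem preconnected_induce_compl_pair (z₁ z₂ : Vertex) :
    (Petersen.induce {z₁, z₂}ᶜ).Preconnected := by
  obtain ⟨i, rfl⟩ := ofIndex_bijective.surjective z₁
  obtain ⟨j, rfl⟩ := ofIndex_bijective.surjective z₂
  have hreach : ∀ k (hi : k ≠ i) (hj : k ≠ j), (Petersen.induce {ofIndex i, ofIndex j}ᶜ).Reachable
      ⟨_, ofIndex_mem_compl_pair (bfsRoot_ne i j).1 (bfsRoot_ne i j).2⟩
      ⟨_, ofIndex_mem_compl_pair hi hj⟩ := fun k hi hj =>
    (reachable_of_mem_bfs i j 5 k (mem_bfs_five i j k hi hj)).2.2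
  rintro ⟨u, hu⟩ ⟨v, hv⟩
  obtain ⟨k, rfl⟩ := ofIndex_bijective.surjective u
  obtain ⟨l, rfl⟩ := ofIndex_bijective.surjective v
  simp only [Set.mem_compl_iff, Set.mem_insert_iff, Set.mem_singleton_iff, not_or] at hu hv
  exact (hreach k (mt (congrArg _) hu.1) (mt (congrArg _) hu.2)).symm.trans
    (hreach l (mt (congrArg _) hv.1) (mt (congrArg _) hv.2))

theorem kConnected_three : KConnected 3 Petersen :=
  kConnected_of_preconnected_induce_compl (by rw [card_vertex]; norm_num) fun S hS => by
    obtain ⟨z₁, z₂, -, rfl⟩ := Set.ncard_eq_two.mp (by omega : S.ncard = 2)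
    exact preconnected_induce_compl_pair z₁ z₂

end Petersen

/-- Every `(K_9,2)`-cockade on `n` vertices has exactly `5n - 9` edges
and does not contain the Petersen graph as a minor. -/
theorem k9_cockade_edges_and_petersen_free {V : Type} [Fintype V] (G : SimpleGraph V)
    (hG : IsK9Cockade G) :
    (edgeCount G : ℤ) = 5 * (Nat.card V : ℤ) - 9 ∧ ¬ IsMinor Petersen G := by
  refine ⟨?_, fun hminor => ?_⟩
  · have hE := CockadeOn.two_mul_ncard_edgeSet_inter_sym2 hG
    rw [Set.sym2_univ, Set.inter_univ, Set.ncard_univ] at hE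
    rw [edgeCount, Nat.card_coe_set_eq]
    push_cast at hE
    linarith
  · obtain ⟨M⟩ := hminor.nonempty_minorModel
    exact CockadeOn.not_minorModel_subset hG Petersen.kConnected_three
      (by rw [Petersen.card_vertex]; norm_num) M fun _ => Set.subset_univ _
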